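/- Let (G_j)_{j∈J} be a directed system of groups with directed colimit G, let j₀ ∈ J and g ∈ G_{j₀} with g ∈ [G_{j₀}, G_{j₀}]. Then scl_G(ḡ) = inf_{j ≥ j₀} scl_{G_j}(g_j), where scl denotes stable commutator length. -/

import Mathlib

open scoped commutatorElement

/-- The set of lengths of expressions of `g` as a product of commutators. -/
def clSet {G : Type*} [Group G] (g : G) : Set ℕ :=
  {n | ∃ l : List (G × G), l.length = n ∧ (l.map fun p => ⁅p.1, p.2⁆).prod = g}

/-- The commutator length of `g` (junk value if `g ∉ [G,G]`). -/
noncomputable def cl {G : Type*} [Group G] (g : G) : ℕ := sInf (clSet g)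

/-- Stable commutator length, as the infimum of `cl(gⁿ)/n` over `n ≥ 1`
(which equals the limit, by Fekete's subadditivity lemma). -/
noncomputable def scl {G : Type*} [Group G] (g : G) : ℝ :=
  ⨅ n : ℕ+, (cl (g ^ (n : ℕ)) : ℝ) / (n : ℕ)

/-!
Commutator length can only drop under homomorphisms, which gives `scl(ḡ) ≤ scl(g_j)` for every
stage `j`. Conversely, an expression of `ḡⁿ` as a product of `m` commutators involves finitely
many elements of the colimit. They lift to a common stage, where the lifted product and `g_jⁿ`
have the same image in the colimit, so they agree at some later stage. There `g_jⁿ` is a product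
of `m` commutators, whence `inf_j scl(g_j) ≤ cl(ḡⁿ)/n` for every `n`.
-/

section CommutatorLength

variable {G H : Type*} [Group G] [Group H]

lemma map_prod_commutators (ψ : G →* H) (l : List (G × G)) :
    ψ (l.map fun p => ⁅p.1, p.2⁆).prod =
      ((l.map (Prod.map ψ ψ)).map fun p => ⁅p.1, p.2⁆).prod := by
  simp [map_list_prod, Function.comp_def, map_commutatorElement]

lemma length_mem_clSet (l : List (G × G)) :
    l.length ∈ clSet (l.map fun p => ⁅p.1, p.2⁆).prod :=
  ⟨l, rfl, rfl⟩

lemma zero_mem_clSet_one : 0 ∈ clSet (1 : G) := length_mem_clSet []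

lemma add_mem_clSet_mul {a b : G} {m n : ℕ} (ha : m ∈ clSet a) (hb : n ∈ clSet b) :
    m + n ∈ clSet (a * b) := by
  obtain ⟨l₁, rfl, rfl⟩ := ha
  obtain ⟨l₂, rfl, rfl⟩ := hb
  simpa using length_mem_clSet (l₁ ++ l₂)

lemma mem_clSet_inv {a : G} {n : ℕ} (ha : n ∈ clSet a) : n ∈ clSet a⁻¹ := by
  obtain ⟨l, rfl, rfl⟩ := ha
  refine ⟨l.reverse.map Prod.swap, by simp, ?_⟩
  simp [List.prod_inv_reverse, List.map_reverse, Function.comp_def, commutatorElement_inv]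

lemma mem_clSet_map (ψ : G →* H) {g : G} {n : ℕ} (h : n ∈ clSet g) : n ∈ clSet (ψ g) := by
  obtain ⟨l, rfl, rfl⟩ := h
  simpa [map_prod_commutators] using length_mem_clSet (l.map (Prod.map ψ ψ))

lemma clSet_nonempty_of_mem_commutator {g : G} (hg : g ∈ commutator G) :
    (clSet g).Nonempty := by
  rw [commutator_eq_closure] at hg
  induction hg using Subgroup.closure_induction with
  | mem x hx =>
    obtain ⟨a, b, rfl⟩ := hx
    exact ⟨1, by simpa using length_mem_clSet [(a, b)]⟩
  | one => exact ⟨0, zero_mem_clSet_one⟩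
  | mul x y _ _ hx hy => exact ⟨_, add_mem_clSet_mul hx.some_mem hy.some_mem⟩
  | inv x _ hx => exact ⟨_, mem_clSet_inv hx.some_mem⟩

lemma map_mem_commutator (ψ : G →* H) {g : G} (hg : g ∈ commutator G) :
    ψ g ∈ commutator H :=
  Subgroup.commutator_mono le_top le_top (map_commutator_eq G ψ ▸ Subgroup.mem_map_of_mem ψ hg)

lemma cl_mem_clSet {g : G} (hg : g ∈ commutator G) : cl g ∈ clSet g :=
  Nat.sInf_mem (clSet_nonempty_of_mem_commutator hg)

lemma cl_le_of_mem_clSet {g : G} {n : ℕ} (h : n ∈ clSet g) : cl g ≤ n := Nat.sInf_le h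

lemma cl_map_le (ψ : G →* H) {g : G} (hg : g ∈ commutator G) : cl (ψ g) ≤ cl g :=
  cl_le_of_mem_clSet (mem_clSet_map ψ (cl_mem_clSet hg))

lemma bddBelow_range_cl_pow_div (g : G) :
    BddBelow (Set.range fun n : ℕ+ => (cl (g ^ (n : ℕ)) : ℝ) / (n : ℕ)) :=
  ⟨0, by rintro _ ⟨n, rfl⟩; positivity⟩

lemma scl_nonneg (g : G) : 0 ≤ scl g := le_ciInf fun _ => by positivity

lemma scl_le_cl_pow_div (g : G) (n : ℕ+) : scl g ≤ (cl (g ^ (n : ℕ)) : ℝ) / (n : ℕ) :=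
  ciInf_le (bddBelow_range_cl_pow_div g) n

lemma scl_map_le (ψ : G →* H) {g : G} (hg : g ∈ commutator G) : scl (ψ g) ≤ scl g := by
  refine ciInf_mono (bddBelow_range_cl_pow_div _) fun n => ?_
  have hcl : cl (ψ g ^ (n : ℕ)) ≤ cl (g ^ (n : ℕ)) := by
    rw [← map_pow]
    exact cl_map_le ψ (Subgroup.pow_mem _ hg n)
  gcongr

end CommutatorLength

section DirectedColimit

variable {J : Type*} [Preorder J] {G : J → Type*} [∀ j, Group (G j)]
  {f : ∀ i j : J, i ≤ j → (G i →* G j)} {GG : Type*} [Group GG] {φ : ∀ j, G j →* GG}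

lemma exists_le_lift (hdir : ∀ i j : J, ∃ k, i ≤ k ∧ j ≤ k)
    (hcompat : ∀ (i j : J) (hij : i ≤ j) (x : G i), φ j (f i j hij x) = φ i x)
    (hsurj : ∀ y : GG, ∃ j x, φ j x = y) (i : J) (y : GG) :
    ∃ k, ∃ _ : i ≤ k, ∃ x : G k, φ k x = y := by
  obtain ⟨j, x, rfl⟩ := hsurj y
  obtain ⟨k, hik, hjk⟩ := hdir i j
  exact ⟨k, hik, f j k hjk x, hcompat j k hjk x⟩

lemma exists_le_list_lift (hdir : ∀ i j : J, ∃ k, i ≤ k ∧ j ≤ k)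
    (hcompat : ∀ (i j : J) (hij : i ≤ j) (x : G i), φ j (f i j hij x) = φ i x)
    (hsurj : ∀ y : GG, ∃ j x, φ j x = y) (i : J) (L : List (GG × GG)) :
    ∃ k, ∃ _ : i ≤ k, ∃ L' : List (G k × G k), L'.map (Prod.map (φ k) (φ k)) = L := by
  induction L generalizing i with
  | nil => exact ⟨i, le_rfl, [], rfl⟩
  | cons p L ih =>
    obtain ⟨k₁, hik₁, a, ha⟩ := exists_le_lift hdir hcompat hsurj i p.1
    obtain ⟨k₂, hk₁k₂, b, hb⟩ := exists_le_lift hdir hcompat hsurj k₁ p.2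
    obtain ⟨k, hk₂k, L', hL'⟩ := ih k₂
    refine ⟨k, hik₁.trans (hk₁k₂.trans hk₂k),
      (f k₁ k (hk₁k₂.trans hk₂k) a, f k₂ k hk₂k b) :: L', ?_⟩
    simp [hcompat, ha, hb, hL']

lemma exists_cl_map_le (hdir : ∀ i j : J, ∃ k, i ≤ k ∧ j ≤ k)
    (htrans : ∀ (i j k : J) (hij : i ≤ j) (hjk : j ≤ k) (x : G i),
      f j k hjk (f i j hij x) = f i k (hij.trans hjk) x)
    (hcompat : ∀ (i j : J) (hij : i ≤ j) (x : G i), φ j (f i j hij x) = φ i x)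
    (hsurj : ∀ y : GG, ∃ j x, φ j x = y)
    (heq : ∀ (i : J) (x y : G i), φ i x = φ i y →
      ∃ j, ∃ hij : i ≤ j, f i j hij x = f i j hij y)
    {i : J} (x : G i) (hx : φ i x ∈ commutator GG) :
    ∃ j, ∃ hij : i ≤ j, cl (f i j hij x) ≤ cl (φ i x) := by
  obtain ⟨l, hl, hprod⟩ := cl_mem_clSet hx
  obtain ⟨k, hik, l', rfl⟩ := exists_le_list_lift hdir hcompat hsurj i l
  have hk : φ k (l'.map fun p => ⁅p.1, p.2⁆).prod = φ k (f i k hik x) := by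
    rw [map_prod_commutators, hprod, hcompat]
  obtain ⟨j, hkj, hj⟩ := heq k _ _ hk
  refine ⟨j, hik.trans hkj, cl_le_of_mem_clSet ?_⟩
  rw [← htrans i k j hik hkj, ← hj, ← hl, List.length_map]
  exact mem_clSet_map _ (length_mem_clSet l')

end DirectedColimit

theorem scl_of_directed_colimit_general
    {J : Type*} [Preorder J]
    (hdir : ∀ i j : J, ∃ k, i ≤ k ∧ j ≤ k)
    (G : J → Type*) [∀ j, Group (G j)]
    (f : ∀ i j : J, i ≤ j → (G i →* G j))
    (htrans : ∀ (i j k : J) (hij : i ≤ j) (hjk : j ≤ k) (x : G i),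
      f j k hjk (f i j hij x) = f i k (hij.trans hjk) x)
    (GG : Type*) [Group GG] (φ : ∀ j, G j →* GG)
    (hcompat : ∀ (i j : J) (hij : i ≤ j) (x : G i), φ j (f i j hij x) = φ i x)
    (hsurj : ∀ y : GG, ∃ j x, φ j x = y)
    (heq : ∀ (i : J) (x y : G i), φ i x = φ i y →
      ∃ j, ∃ hij : i ≤ j, f i j hij x = f i j hij y)
    (j₀ : J) (g : G j₀) (hg : g ∈ commutator (G j₀)) :
    scl (φ j₀ g) = sInf {x : ℝ | ∃ j, ∃ h : j₀ ≤ j, x = scl (f j₀ j h g)} := by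
  refine le_antisymm (le_csInf ⟨_, j₀, le_rfl, rfl⟩ ?_) (le_ciInf fun n => ?_)
  · rintro _ ⟨j, hj, rfl⟩
    rw [← hcompat j₀ j hj g]
    exact scl_map_le (φ j) (map_mem_commutator _ hg)
  · obtain ⟨j, hj, hcl⟩ := exists_cl_map_le hdir htrans hcompat hsurj heq (g ^ (n : ℕ))
      (by rw [map_pow]; exact Subgroup.pow_mem _ (map_mem_commutator _ hg) n)
    rw [map_pow, map_pow] at hcl
    have hbdd : BddBelow {x : ℝ | ∃ j, ∃ h : j₀ ≤ j, x = scl (f j₀ j h g)} :=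
      ⟨0, by rintro _ ⟨_, _, rfl⟩; exact scl_nonneg _⟩
    calc sInf {x : ℝ | ∃ j, ∃ h : j₀ ≤ j, x = scl (f j₀ j h g)}
        ≤ scl (f j₀ j hj g) := csInf_le hbdd ⟨j, hj, rfl⟩
      _ ≤ (cl (f j₀ j hj g ^ (n : ℕ)) : ℝ) / (n : ℕ) := scl_le_cl_pow_div _ n
      _ ≤ (cl (φ j₀ g ^ (n : ℕ)) : ℝ) / (n : ℕ) := by gcongr

theorem scl_of_directed_colimit
    {J : Type*} [Preorder J]
    (hdir : ∀ i j : J, ∃ k, i ≤ k ∧ j ≤ k)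
    (G : J → Type*) [∀ j, Group (G j)]
    (f : ∀ i j : J, i ≤ j → (G i →* G j))
    (hrefl : ∀ (i : J) (x : G i), f i i le_rfl x = x)
    (htrans : ∀ (i j k : J) (hij : i ≤ j) (hjk : j ≤ k) (x : G i),
      f j k hjk (f i j hij x) = f i k (hij.trans hjk) x)
    (GG : Type*) [Group GG] (φ : ∀ j, G j →* GG)
    (hcompat : ∀ (i j : J) (hij : i ≤ j) (x : G i), φ j (f i j hij x) = φ i x)
    (hsurj : ∀ y : GG, ∃ j x, φ j x = y)
    (heq : ∀ (i : J) (x y : G i), φ i x = φ i y →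
      ∃ j, ∃ hij : i ≤ j, f i j hij x = f i j hij y)
    (j₀ : J) (g : G j₀) (hg : g ∈ commutator (G j₀)) :
    scl (φ j₀ g) = sInf {x : ℝ | ∃ j, ∃ h : j₀ ≤ j, x = scl (f j₀ j h g)} :=
  scl_of_directed_colimit_general hdir G f htrans GG φ hcompat hsurj heq j₀ g hg
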